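/- Let γ be the Euler–Mascheroni constant, Γ the real Gamma function, ψ = deriv (log ∘ Γ), and let c = (4/3)⁴ ((π²/6 + (1−γ)²) π^{−1/2} − 1). For every ξ > 3, ξ^{−4} (T_1(ξ) + T_2(ξ)) > c Γ(1+ξ)², where T_1(ξ) = (π²/6 + (1−γ)²)(1+ξ)² Γ(1+2ξ) and T_2(ξ) = π²/6 + (2(1−γ)(γ + ψ(1+ξ)) − π²/3) Γ(2+ξ) − (1 + ψ(1+ξ))² Γ(2+ξ)². Consequently the ξ-component π_J(ξ) = ξ^{−2}√(T_1(ξ)+T_2(ξ)) of the GEV Jeffreys prior satisfies π_J(ξ) > c^{1/2} Γ(1+ξ) for ξ > 3. -/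
import Mathlib


open Real
open Set

/-- The digamma function `ψ = (log ∘ Γ)'`. -/
noncomputable def digamma (x : ℝ) : ℝ := deriv (Real.log ∘ Real.Gamma) x

/-- `T₁(ξ) = (π²/6 + (1-γ)²)(1+ξ)² Γ(1+2ξ)`. -/
noncomputable def jeffreysT1 (ξ : ℝ) : ℝ :=
  (Real.pi ^ 2 / 6 + (1 - Real.eulerMascheroniConstant) ^ 2) * (1 + ξ) ^ 2 *
    Real.Gamma (1 + 2 * ξ)

/-- `T₂(ξ) = π²/6 + (2(1-γ)(γ+ψ(1+ξ)) - π²/3) Γ(2+ξ) - (1+ψ(1+ξ))² Γ(2+ξ)²`. -/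
noncomputable def jeffreysT2 (ξ : ℝ) : ℝ :=
  Real.pi ^ 2 / 6 +
    (2 * (1 - Real.eulerMascheroniConstant) *
        (Real.eulerMascheroniConstant + digamma (1 + ξ)) -
      Real.pi ^ 2 / 3) * Real.Gamma (2 + ξ) -
    (1 + digamma (1 + ξ)) ^ 2 * Real.Gamma (2 + ξ) ^ 2

/-- The ξ-component `π_J(ξ) = ξ^{-2} √(T₁(ξ) + T₂(ξ))` of the Jeffreys prior
for the GEV distribution, defined for `ξ > -1/2` (and `0` for `ξ ≤ -1/2`). -/
noncomputable def jeffreysXi (ξ : ℝ) : ℝ :=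
  if -1 / 2 < ξ then (ξ ^ 2)⁻¹ * Real.sqrt (jeffreysT1 ξ + jeffreysT2 ξ) else 0

/-- The constant `c = (4/3)⁴ ((π²/6 + (1-γ)²) π^{-1/2} - 1)`. -/
noncomputable def jeffreysC : ℝ :=
  (4 / 3 : ℝ) ^ 4 *
    ((Real.pi ^ 2 / 6 + (1 - Real.eulerMascheroniConstant) ^ 2) *
        Real.pi ^ (-(1 / 2 : ℝ)) - 1)



lemma differentiableAt_logGamma {x : ℝ} (hx : 0 < x) :
    DifferentiableAt ℝ (Real.log ∘ Real.Gamma) x := by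
  have h1 : DifferentiableAt ℝ Real.Gamma x :=
    Real.differentiableAt_Gamma (fun m => by
      have : (0:ℝ) ≤ m := Nat.cast_nonneg m
      intro h; rw [h] at hx; linarith)
  exact (Real.differentiableAt_log (Real.Gamma_pos_of_pos hx).ne').comp x h1

lemma digamma_le_log {x : ℝ} (hx : 0 < x) : digamma x ≤ Real.log x := by
  have h := Real.convexOn_log_Gamma.deriv_le_slope (mem_Ioi.mpr hx)
    (mem_Ioi.mpr (by linarith : (0:ℝ) < x + 1)) (by linarith)
    (differentiableAt_logGamma hx)
  rw [slope_def_field] at h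
  simp only [Function.comp_apply] at h
  rw [Real.Gamma_add_one hx.ne',
    Real.log_mul hx.ne' (Real.Gamma_pos_of_pos hx).ne'] at h
  have he : (Real.log x + Real.log (Real.Gamma x) - Real.log (Real.Gamma x)) / (x + 1 - x)
      = Real.log x := by
    rw [show x + 1 - x = 1 by ring]; ring
  rw [he] at h
  exact h

lemma digamma_nonneg {x : ℝ} (hx : 3 < x) : 0 ≤ digamma x := by
  have h0 : (0:ℝ) < x := by linarith
  have h := Real.convexOn_log_Gamma.slope_le_deriv (mem_Ioi.mpr (by norm_num : (0:ℝ) < 3))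
    (mem_Ioi.mpr h0) hx (differentiableAt_logGamma h0)
  rw [slope_def_field] at h
  simp only [Function.comp_apply] at h
  have hG3 : Real.Gamma 3 = 2 := by
    rw [show (3:ℝ) = 2 + 1 by norm_num, Real.Gamma_add_one two_ne_zero, Real.Gamma_two]
    norm_num
  have hmono : Real.Gamma 3 < Real.Gamma x :=
    Real.Gamma_strictMonoOn_Ici (by norm_num) (by simp [mem_Ici]; linarith) hx
  have hlog : Real.log (Real.Gamma 3) ≤ Real.log (Real.Gamma x) :=
    Real.log_le_log (by rw [hG3]; norm_num) hmono.le
  refine le_trans ?_ h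
  apply div_nonneg <;> linarith

lemma two_rpow_ge {ξ : ℝ} (hξ : 3 < ξ) : 2.09 * ξ^3 ≤ (2:ℝ) ^ (2*ξ) := by
  have hlog2 : (0.6931471803:ℝ) < Real.log 2 := Real.log_two_gt_d9
  set t : ℝ := Real.log 2 * (2*ξ - 6) / 3 with ht
  have h1 : (2:ℝ)^(2*ξ) = 64 * Real.exp t ^ 3 := by
    rw [Real.rpow_def_of_pos two_pos]
    have e3 : Real.exp t ^ 3 = Real.exp (t + t + t) := by
      rw [Real.exp_add, Real.exp_add]; ring
    have e6 : Real.exp (Real.log 2 + Real.log 2 + Real.log 2 + Real.log 2 + Real.log 2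
        + Real.log 2) = 64 := by
      simp only [Real.exp_add, Real.exp_log two_pos]; norm_num
    rw [e3, ← e6, ← Real.exp_add]
    congr 1
    rw [ht]; ring
  rw [h1]
  have h2 : 0.32 * ξ ≤ Real.exp t := by
    have he := Real.add_one_le_exp t
    have hm : (0.6931471803:ℝ) * (2*ξ - 6) ≤ Real.log 2 * (2*ξ - 6) :=
      mul_le_mul_of_nonneg_right hlog2.le (by linarith)
    have htv : 0.32*ξ ≤ t + 1 := by rw [ht]; nlinarith
    linarith
  have h3 : (0.32*ξ)^3 ≤ Real.exp t ^ 3 := by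
    apply pow_le_pow_left₀ (by nlinarith) h2
  have h4 : (0.32*ξ)^3 = 0.032768 * ξ^3 := by ring
  have hx3 : (0:ℝ) < ξ^3 := by positivity
  linarith

lemma Gamma_dup {ξ : ℝ} (hξ : 3 < ξ) :
    Real.Gamma (1 + 2*ξ) =
      Real.Gamma (ξ + 1/2) * Real.Gamma (ξ + 1) * (2:ℝ)^(2*ξ) / Real.sqrt π := by
  have h := Real.Gamma_mul_Gamma_add_half (ξ + 1/2)
  rw [show ξ + 1/2 + 1/2 = ξ + 1 by ring, show 2*(ξ + 1/2) = 1 + 2*ξ by ring,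
    show (1:ℝ) - (1 + 2*ξ) = -(2*ξ) by ring,
    Real.rpow_neg (by norm_num : (0:ℝ) ≤ 2)] at h
  have hp : (0:ℝ) < (2:ℝ)^(2*ξ) := Real.rpow_pos_of_pos two_pos _
  have hs : (0:ℝ) < Real.sqrt π := Real.sqrt_pos.mpr Real.pi_pos
  field_simp at h ⊢
  linarith [h]

set_option maxHeartbeats 1000000 in
lemma jeffreys_key {ξ : ℝ} (hξ : 3 < ξ) :
    0.22 * ξ^4 * Real.Gamma (1+ξ)^2 < jeffreysT1 ξ + jeffreysT2 ξ := by
  have hπ1 : 3.141592 < π := Real.pi_gt_d6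
  have hπ2 : π < 3.141593 := Real.pi_lt_d6
  have hγ1 : 1/2 < Real.eulerMascheroniConstant := Real.one_half_lt_eulerMascheroniConstant
  have hγ2 : Real.eulerMascheroniConstant < 2/3 := Real.eulerMascheroniConstant_lt_two_thirds
  have hξ0 : (0:ℝ) < ξ := by linarith
  have hx0 : (0:ℝ) < 1 + ξ := by linarith
  have hGpos : 0 < Real.Gamma (1+ξ) := Real.Gamma_pos_of_pos hx0
  have hGrec : Real.Gamma (1+ξ) = ξ * Real.Gamma ξ := by
    rw [add_comm, Real.Gamma_add_one hξ0.ne']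
  have hG3 : Real.Gamma 3 = 2 := by
    rw [show (3:ℝ) = 2 + 1 by norm_num, Real.Gamma_add_one two_ne_zero, Real.Gamma_two]
    norm_num
  have hΓξ : 2 < Real.Gamma ξ := by
    rw [← hG3]
    exact Real.Gamma_strictMonoOn_Ici (by norm_num) (by simp [mem_Ici]; linarith) hξ
  have hGx : 1 + ξ ≤ Real.Gamma (1+ξ) := by
    rw [hGrec]; nlinarith [mul_pos hξ0 (by linarith : (0:ℝ) < Real.Gamma ξ - 2)]
  have hΓhalf : Real.Gamma ξ ≤ Real.Gamma (ξ + 1/2) :=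
    (Real.Gamma_strictMonoOn_Ici (by simp [mem_Ici]; linarith) (by simp [mem_Ici]; linarith)
      (by linarith)).le
  have hP := two_rpow_ge hξ
  have hPpos : (0:ℝ) < (2:ℝ)^(2*ξ) := Real.rpow_pos_of_pos two_pos _
  have hs : (0:ℝ) < Real.sqrt π := Real.sqrt_pos.mpr Real.pi_pos
  have hsq : Real.sqrt π ^ 2 = π := Real.sq_sqrt Real.pi_pos.le
  have hs2 : Real.sqrt π ≤ 1.7725 := by nlinarith [Real.sqrt_nonneg π]
  have hxG : Real.Gamma (ξ + 1) = Real.Gamma (1 + ξ) := by rw [add_comm]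
  have hΓξpos : 0 < Real.Gamma ξ := by linarith
  -- duplication-based lower bound on Γ(1+2ξ)
  have hD : 1.17 * ξ^2 * Real.Gamma (1+ξ)^2 ≤ Real.Gamma (1 + 2*ξ) := by
    rw [Gamma_dup hξ, hxG, le_div_iff₀ hs]
    have h1 : 1.17 * ξ^2 * Real.Gamma (1+ξ)^2 * Real.sqrt π
        ≤ 1.17 * ξ^2 * Real.Gamma (1+ξ)^2 * 1.7725 :=
      mul_le_mul_of_nonneg_left hs2 (by positivity)
    have h2 : Real.Gamma ξ * Real.Gamma (1+ξ) * (2.09 * ξ^3)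
        ≤ Real.Gamma (ξ + 1/2) * Real.Gamma (1+ξ) * (2:ℝ)^(2*ξ) :=
      mul_le_mul (mul_le_mul_of_nonneg_right hΓhalf hGpos.le) hP (by positivity) (by positivity)
    have h3 : Real.Gamma ξ * Real.Gamma (1+ξ) * (2.09 * ξ^3)
        = 2.09 * ξ^2 * Real.Gamma (1+ξ)^2 := by
      rw [hGrec]; ring
    have h4 : (0:ℝ) ≤ ξ^2 * Real.Gamma (1+ξ)^2 := by positivity
    nlinarith [h1, h2, h3, h4]
  -- T1 lower bound
  have hπ1sq : (3.141592:ℝ)^2 < π^2 := by nlinarith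
  have hA : 1.756 ≤ π^2/6 + (1 - Real.eulerMascheroniConstant)^2 := by
    have hdsq : ((1:ℝ)/3)^2 ≤ (1 - Real.eulerMascheroniConstant)^2 :=
      pow_le_pow_left₀ (by norm_num) (by linarith) 2
    nlinarith [hπ1sq, hdsq]
  have hT1 : 2.05 * ξ^4 * Real.Gamma (1+ξ)^2 ≤ jeffreysT1 ξ := by
    simp only [jeffreysT1]
    have e1 : 1.756 * ξ^2 ≤ (π^2/6 + (1 - Real.eulerMascheroniConstant)^2) * (1+ξ)^2 :=
      mul_le_mul hA (pow_le_pow_left₀ hξ0.le (by linarith) 2) (by positivity) (by linarith)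
    have e2 : (1.756 * ξ^2) * (1.17 * ξ^2 * Real.Gamma (1+ξ)^2)
        ≤ ((π^2/6 + (1 - Real.eulerMascheroniConstant)^2) * (1+ξ)^2) * Real.Gamma (1 + 2*ξ) :=
      mul_le_mul e1 hD (by positivity) (by positivity)
    nlinarith [e2, mul_nonneg (pow_nonneg hξ0.le 4) (sq_nonneg (Real.Gamma (1+ξ)))]
  -- T2 lower bound
  have hψ0 : 0 ≤ digamma (1+ξ) := digamma_nonneg (by linarith)
  have hψ1 : digamma (1+ξ) ≤ Real.log (1+ξ) := digamma_le_log hx0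
  have hlog : Real.log (1+ξ) ≤ (1+ξ)/2 := by
    have hu0 : 0 < Real.sqrt (1+ξ) := Real.sqrt_pos.mpr hx0
    have hu2 : Real.sqrt (1+ξ)^2 = 1+ξ := Real.sq_sqrt hx0.le
    have hlu : Real.log (Real.sqrt (1+ξ)) ≤ Real.sqrt (1+ξ) - 1 :=
      Real.log_le_sub_one_of_pos hu0
    have he : Real.log (1+ξ) = 2 * Real.log (Real.sqrt (1+ξ)) := by
      rw [Real.log_sqrt hx0.le]; ring
    nlinarith [sq_nonneg (Real.sqrt (1+ξ) - 2)]
  have hΓ2 : Real.Gamma (2+ξ) = (1+ξ) * Real.Gamma (1+ξ) := by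
    rw [show (2:ℝ)+ξ = (1+ξ)+1 by ring, Real.Gamma_add_one hx0.ne']
  have hT2 : -(3.3 * Real.Gamma (1+ξ)^2) - (16/9) * ξ^4 * Real.Gamma (1+ξ)^2
      ≤ jeffreysT2 ξ := by
    simp only [jeffreysT2, hΓ2]
    have hπsq : π^2 ≤ 9.86961 := by nlinarith
    have hxGle : (1+ξ) * Real.Gamma (1+ξ) ≤ Real.Gamma (1+ξ)^2 := by nlinarith
    have hxGpos : 0 < (1+ξ) * Real.Gamma (1+ξ) := by positivity
    have hcoef : -3.3 ≤ 2 * (1 - Real.eulerMascheroniConstant) *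
        (Real.eulerMascheroniConstant + digamma (1+ξ)) - π^2/3 := by
      linarith [mul_nonneg (mul_nonneg (by norm_num : (0:ℝ) ≤ 2)
          (by linarith : (0:ℝ) ≤ 1 - Real.eulerMascheroniConstant))
        (by linarith : (0:ℝ) ≤ Real.eulerMascheroniConstant + digamma (1+ξ)), hπsq]
    have hterm2 : -(3.3 * Real.Gamma (1+ξ)^2)
        ≤ (2 * (1 - Real.eulerMascheroniConstant) *
            (Real.eulerMascheroniConstant + digamma (1+ξ)) - π^2/3)
          * ((1+ξ) * Real.Gamma (1+ξ)) := by
      have := mul_le_mul_of_nonneg_right hcoef hxGpos.le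
      linarith [this, hxGle]
    have hterm3 : (1 + digamma (1+ξ))^2 * ((1+ξ) * Real.Gamma (1+ξ))^2
        ≤ (16/9) * ξ^4 * Real.Gamma (1+ξ)^2 := by
      have h1 : 1 + digamma (1+ξ) ≤ ξ := by linarith
      have h2 : (1 + digamma (1+ξ))^2 ≤ ξ^2 := pow_le_pow_left₀ (by linarith) h1 2
      have h3 : ((1+ξ) * Real.Gamma (1+ξ))^2 ≤ ((4/3) * ξ)^2 * Real.Gamma (1+ξ)^2 := by
        have : (1+ξ)^2 ≤ ((4/3)*ξ)^2 := pow_le_pow_left₀ (by linarith) (by linarith) 2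
        nlinarith [this, sq_nonneg (Real.Gamma (1+ξ))]
      calc (1 + digamma (1+ξ))^2 * ((1+ξ) * Real.Gamma (1+ξ))^2
          ≤ ξ^2 * (((4/3) * ξ)^2 * Real.Gamma (1+ξ)^2) :=
            mul_le_mul h2 h3 (by positivity) (by positivity)
        _ = (16/9) * ξ^4 * Real.Gamma (1+ξ)^2 := by ring
    linarith [hterm2, hterm3, sq_nonneg π]
  -- combine
  have h9 : (9:ℝ) ≤ ξ^2 := by nlinarith
  have hξ4 : (81:ℝ) ≤ ξ^4 := by nlinarith [h9, sq_nonneg (ξ^2 - 9)]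
  have hm : 81 * Real.Gamma (1+ξ)^2 ≤ ξ^4 * Real.Gamma (1+ξ)^2 :=
    mul_le_mul_of_nonneg_right hξ4 (sq_nonneg _)
  have hG2 : 0 < Real.Gamma (1+ξ)^2 := by positivity
  linarith [hT1, hT2, hm]

lemma jeffreysC_le : jeffreysC ≤ 0.22 := by
  have hπ1 : 3.141592 < π := Real.pi_gt_d6
  have hπ2 : π < 3.141593 := Real.pi_lt_d6
  have hγ1 : 1/2 < Real.eulerMascheroniConstant := Real.one_half_lt_eulerMascheroniConstant
  have hγ2 : Real.eulerMascheroniConstant < 2/3 := Real.eulerMascheroniConstant_lt_two_thirds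
  have hs : (0:ℝ) < Real.sqrt π := Real.sqrt_pos.mpr Real.pi_pos
  have hsq : Real.sqrt π ^ 2 = π := Real.sq_sqrt Real.pi_pos.le
  have hslb : 1.7722 ≤ Real.sqrt π := by nlinarith [Real.sqrt_nonneg π]
  have hinv : (Real.sqrt π)⁻¹ ≤ 0.5643 := by
    have h1 : (Real.sqrt π)⁻¹ ≤ (1.7722:ℝ)⁻¹ := by
      apply inv_anti₀ (by norm_num) hslb
    have h2 : ((1.7722:ℝ))⁻¹ ≤ 0.5643 := by norm_num
    linarith
  have hAub : π^2/6 + (1 - Real.eulerMascheroniConstant)^2 ≤ 1.895 := by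
    have h1 : (1 - Real.eulerMascheroniConstant)^2 ≤ ((1:ℝ)/2)^2 :=
      pow_le_pow_left₀ (by linarith) (by linarith) 2
    nlinarith [hπ2, h1]
  have hApos : (0:ℝ) ≤ π^2/6 + (1 - Real.eulerMascheroniConstant)^2 := by positivity
  have hmul : (π^2/6 + (1 - Real.eulerMascheroniConstant)^2) * (Real.sqrt π)⁻¹
      ≤ 1.895 * 0.5643 := mul_le_mul hAub hinv (by positivity) (by norm_num)
  simp only [jeffreysC]
  rw [Real.rpow_neg Real.pi_pos.le, ← Real.sqrt_eq_rpow]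
  have h44 : ((4:ℝ)/3)^4 = 256/81 := by norm_num
  rw [h44]
  linarith

/-- For every `ξ > 3`, `ξ^{-4}(T₁(ξ) + T₂(ξ)) > c Γ(1+ξ)²`, and consequently
the ξ-component `π_J(ξ) = ξ^{-2}√(T₁(ξ)+T₂(ξ))` of the GEV Jeffreys prior
satisfies `π_J(ξ) > c^{1/2} Γ(1+ξ)`. -/
theorem jeffreys_xi_lower_bound (ξ : ℝ) (hξ : 3 < ξ) :
    jeffreysC * Real.Gamma (1 + ξ) ^ 2 < (ξ ^ 4)⁻¹ * (jeffreysT1 ξ + jeffreysT2 ξ) ∧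
    Real.sqrt jeffreysC * Real.Gamma (1 + ξ) <
      (ξ ^ 2)⁻¹ * Real.sqrt (jeffreysT1 ξ + jeffreysT2 ξ) := by
  have hkey := jeffreys_key hξ
  have hξ0 : (0:ℝ) < ξ := by linarith
  have hGpos : 0 < Real.Gamma (1+ξ) := Real.Gamma_pos_of_pos (by linarith)
  have hc := jeffreysC_le
  have h4pos : (0:ℝ) < ξ^4 := by positivity
  have h2pos : (0:ℝ) < ξ^2 := by positivity
  constructor
  · rw [inv_mul_eq_div, lt_div_iff₀ h4pos]
    have hmul : jeffreysC * (Real.Gamma (1+ξ)^2 * ξ^4)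
        ≤ 0.22 * (Real.Gamma (1+ξ)^2 * ξ^4) :=
      mul_le_mul_of_nonneg_right hc (by positivity)
    nlinarith [hmul, hkey]
  · have hstep : Real.sqrt (0.22 * ξ^4 * Real.Gamma (1+ξ)^2)
        < Real.sqrt (jeffreysT1 ξ + jeffreysT2 ξ) :=
      Real.sqrt_lt_sqrt (by positivity) hkey
    have heq : Real.sqrt (0.22 * ξ^4 * Real.Gamma (1+ξ)^2)
        = Real.sqrt 0.22 * (ξ^2 * Real.Gamma (1+ξ)) := by
      rw [show 0.22 * ξ^4 * Real.Gamma (1+ξ)^2 = 0.22 * (ξ^2 * Real.Gamma (1+ξ))^2 by ring,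
        Real.sqrt_mul (by norm_num : (0:ℝ) ≤ 0.22), Real.sqrt_sq (by positivity)]
    have hcs : Real.sqrt jeffreysC ≤ Real.sqrt 0.22 := Real.sqrt_le_sqrt hc
    rw [inv_mul_eq_div, lt_div_iff₀ h2pos]
    calc Real.sqrt jeffreysC * Real.Gamma (1+ξ) * ξ^2
        ≤ Real.sqrt 0.22 * Real.Gamma (1+ξ) * ξ^2 :=
          mul_le_mul_of_nonneg_right (mul_le_mul_of_nonneg_right hcs hGpos.le) h2pos.le
      _ = Real.sqrt (0.22 * ξ^4 * Real.Gamma (1+ξ)^2) := by rw [heq]; ring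
      _ < _ := hstep
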